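/- arXiv:2504.01551 — 7 statements merged into one kernel-verified Lean document; each statement's English description precedes it below -/
import Mathlib

section
/- (Soundness of d-separation in C-DMGs) Let G^c = (C, E^c) be the C-DMG of an ADMG G = (V, E), and let C_X, C_Y, C_W be disjoint subsets of C. If C_X and C_Y are d-separated by C_W in G^c, then in G the sets X = ⋃_{C ∈ C_X} C and Y = ⋃_{C ∈ C_Y} C are d-separated by W = ⋃_{C ∈ C_W} C. -/
/-- A directed mixed graph: directed edges (`dir`) and bidirected edges (`bi`). -/
structure DMG (V : Type) where
  dir : V → V → Prop
  bi : V → V → Prop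

/-- Orientation of a step of a walk: forward directed, backward directed, or bidirected. -/
inductive EdgeType : Type
  | fwd | bwd | bidir

/-- The step relation of a walk for each edge type. -/
def DMG.step {V : Type} (G : DMG V) : EdgeType → V → V → Prop
  | .fwd, a, b => G.dir a b
  | .bwd, a, b => G.dir b a
  | .bidir, a, b => G.bi a b ∨ G.bi b a

/-- A walk of `n` vertices `v 0, …, v (n-1)` with step types `e 0, …, e (n-2)`. -/
def IsWalk {V : Type} (G : DMG V) (v : ℕ → V) (e : ℕ → EdgeType) (n : ℕ) : Prop :=
  0 < n ∧ ∀ i, i + 1 < n → G.step (e i) (v i) (v (i + 1))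

/-- A path: a walk with no repeated vertices. -/
def IsPath {V : Type} (G : DMG V) (v : ℕ → V) (e : ℕ → EdgeType) (n : ℕ) : Prop :=
  IsWalk G v e n ∧ ∀ i j, i < n → j < n → v i = v j → i = j

/-- The step has an arrowhead at its right endpoint. -/
def headInto : EdgeType → Prop
  | .fwd => True
  | .bwd => False
  | .bidir => True

/-- The step has an arrowhead at its left endpoint. -/
def tailInto : EdgeType → Prop
  | .fwd => False
  | .bwd => True
  | .bidir => True

/-- Position `i` of a walk with step types `e` is a collider:
arrowheads into it from both incident steps. -/
def ColliderAt (e : ℕ → EdgeType) (i : ℕ) : Prop :=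
  headInto (e (i - 1)) ∧ tailInto (e i)

/-- `b` is a descendant of `a`: reachable by a (possibly empty) directed path. -/
def Desc {V : Type} (G : DMG V) (a b : V) : Prop :=
  Relation.ReflTransGen G.dir a b

/-- A walk is blocked by `W` if an endpoint is in `W`, or some non-collider on it is
in `W`, or some collider on it has no descendant in `W`. -/
def Blocked {V : Type} (G : DMG V) (v : ℕ → V) (e : ℕ → EdgeType) (n : ℕ)
    (W : Set V) : Prop :=
  v 0 ∈ W ∨ v (n - 1) ∈ W ∨
    (∃ i, 0 < i ∧ i + 1 < n ∧ ¬ ColliderAt e i ∧ v i ∈ W) ∨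
    (∃ i, 0 < i ∧ i + 1 < n ∧ ColliderAt e i ∧ ∀ d, Desc G (v i) d → d ∉ W)

/-- d-separation: every path from `X` to `Y` is blocked by `W`. -/
def dSep {V : Type} (G : DMG V) (X Y W : Set V) : Prop :=
  ∀ (n : ℕ) (v : ℕ → V) (e : ℕ → EdgeType),
    IsPath G v e n → v 0 ∈ X → v (n - 1) ∈ Y → Blocked G v e n W

/-- The directed part of the graph has no cycles. -/
def Acyclic {V : Type} (G : DMG V) : Prop :=
  ∀ a, ¬ Relation.TransGen G.dir a a

/-- The cluster quotient (C-DMG) of a graph along a cluster map `Cl`. -/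
def DMG.quot {V C : Type} (G : DMG V) (Cl : V → C) : DMG C where
  dir a b := ∃ x y, Cl x = a ∧ Cl y = b ∧ G.dir x y
  bi a b := ∃ x y, Cl x = a ∧ Cl y = b ∧ G.bi x y

/-- The mutilated graph `G_{\overline{A}\underline{B}}`: remove all edges with an
arrowhead into `A` and all directed edges out of `B`. -/
def mutilate {V : Type} (G : DMG V) (A B : Set V) : DMG V where
  dir a b := G.dir a b ∧ b ∉ A ∧ a ∉ B
  bi a b := G.bi a b ∧ a ∉ A ∧ b ∉ A

/-!
An unblocked path of `G` projects along `Cl` to an unblocked walk of the C-DMG: edges,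
descendants and membership in the cluster sets all project. In any DMG an unblocked walk
can be shortened to an unblocked path by cutting out the segment between two visits of a
vertex. The only delicate point is a cut vertex that becomes a collider although neither
visit was one: then the cut-out segment leaves it by a forward edge and returns by an edge
pointing away from it, so the first arrowhead pointing back along the segment sits at a
collider that is a descendant of the cut vertex, and that collider's descendant in `W`
keeps the new collider open.
-/

section Shortening

variable {V : Type} {G : DMG V} {W : Set V}

/-- A vertex `x` entered by a step of type `a` and left by a step of type `b` does not block
a walk. -/
def ActiveVertex (G : DMG V) (x : V) (a b : EdgeType) (W : Set V) : Prop :=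
  (¬ (headInto a ∧ tailInto b) → x ∉ W) ∧
    (headInto a ∧ tailInto b → ∃ d, Desc G x d ∧ d ∈ W)

def IsActive (G : DMG V) (v : ℕ → V) (e : ℕ → EdgeType) (n : ℕ) (W : Set V) : Prop :=
  v 0 ∉ W ∧ v (n - 1) ∉ W ∧
    ∀ k, 0 < k → k + 1 < n → ActiveVertex G (v k) (e (k - 1)) (e k) W

theorem not_blocked_iff_isActive {v : ℕ → V} {e : ℕ → EdgeType} {n : ℕ} :
    ¬ Blocked G v e n W ↔ IsActive G v e n W := by
  simp only [Blocked, IsActive, ActiveVertex, ColliderAt, imp_and, forall_and]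
  push Not
  rfl

theorem EdgeType.eq_fwd_of_not_tailInto {t : EdgeType} (h : ¬ tailInto t) : t = .fwd := by
  cases t <;> simp_all [tailInto]

theorem EdgeType.eq_bwd_of_not_headInto {t : EdgeType} (h : ¬ headInto t) : t = .bwd := by
  cases t <;> simp_all [headInto]

theorem ActiveVertex.glue {x : V} {a b a' b' : EdgeType} (h : ActiveVertex G x a b W)
    (h' : ActiveVertex G x a' b' W)
    (hdetour : b = .fwd → a' = .bwd → ∃ d, Desc G x d ∧ d ∈ W) :
    ActiveVertex G x a b' W := by
  refine ⟨fun hnc => ?_, fun ⟨ha, hb'⟩ => ?_⟩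
  · by_cases ha : headInto a
    · exact h'.1 fun hc => hnc ⟨ha, hc.2⟩
    · exact h.1 fun hc => ha hc.1
  · by_cases hb : tailInto b
    · exact h.2 ⟨ha, hb⟩
    by_cases ha' : headInto a'
    · exact h'.2 ⟨ha', hb'⟩
    exact hdetour (EdgeType.eq_fwd_of_not_tailInto hb) (EdgeType.eq_bwd_of_not_headInto ha')

theorem IsWalk.exists_colliderAt_desc {v : ℕ → V} {e : ℕ → EdgeType} {n : ℕ}
    (hw : IsWalk G v e n) {i d : ℕ} (hi : e i = .fwd) (hd : tailInto (e (i + d)))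
    (hn : i + d < n) : ∃ t, i < t ∧ t ≤ i + d ∧ ColliderAt e t ∧ Desc G (v i) (v t) := by
  induction d generalizing i with
  | zero => simp [hi, tailInto] at hd
  | succ d ih =>
    have hstep : G.dir (v i) (v (i + 1)) := by
      simpa [DMG.step, hi] using hw.2 i (by omega)
    by_cases hnext : tailInto (e (i + 1))
    · exact ⟨i + 1, by omega, by omega, by simp [ColliderAt, hi, headInto, hnext],
        Relation.ReflTransGen.single hstep⟩
    · obtain ⟨t, hit, htd, hct, hdesc⟩ := ih (EdgeType.eq_fwd_of_not_tailInto hnext)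
        (by rwa [show i + 1 + d = i + (d + 1) by omega]) (by omega)
      exact ⟨t, by omega, by omega, hct, Relation.ReflTransGen.head hstep hdesc⟩

/-- The walk `v` with the closed sub-walk from position `i` to position `i + m` cut out. -/
def spliceV (v : ℕ → V) (i m : ℕ) (k : ℕ) : V :=
  if k ≤ i then v k else v (k + m)

def spliceE (e : ℕ → EdgeType) (i m : ℕ) (k : ℕ) : EdgeType :=
  if k < i then e k else e (k + m)

variable {v : ℕ → V} {e : ℕ → EdgeType} {n i m : ℕ}

theorem IsWalk.splice (hw : IsWalk G v e n) (hv : v i = v (i + m)) (hn : i + m < n) :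
    IsWalk G (spliceV v i m) (spliceE e i m) (n - m) := by
  refine ⟨by omega, fun k hk => ?_⟩
  simp only [spliceV, spliceE]
  rcases lt_trichotomy k i with hki | rfl | hki
  · rw [if_pos hki, if_pos hki.le, if_pos (by omega)]
    exact hw.2 k (by omega)
  · rw [if_neg (lt_irrefl k), if_pos le_rfl, if_neg (by omega), hv,
      show k + 1 + m = k + m + 1 by omega]
    exact hw.2 _ (by omega)
  · rw [if_neg (by omega), if_neg (by omega), if_neg (by omega),
      show k + 1 + m = k + m + 1 by omega]
    exact hw.2 _ (by omega)

theorem spliceV_zero : spliceV v i m 0 = v 0 := by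
  simp [spliceV]

theorem spliceV_last (hv : v i = v (i + m)) (hn : i + m < n) :
    spliceV v i m (n - m - 1) = v (n - 1) := by
  unfold spliceV
  split_ifs with h
  · rw [show n - m - 1 = i by omega, hv, show i + m = n - 1 by omega]
  · rw [show n - m - 1 + m = n - 1 by omega]

theorem IsActive.splice (hw : IsWalk G v e n) (ha : IsActive G v e n W)
    (hv : v i = v (i + m)) (hm : 0 < m) (hn : i + m < n) :
    IsActive G (spliceV v i m) (spliceE e i m) (n - m) W := by
  obtain ⟨h0, h1, hk⟩ := ha
  refine ⟨spliceV_zero ▸ h0, (spliceV_last hv hn).symm ▸ h1, fun k hk0 hk1 => ?_⟩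
  simp only [spliceV, spliceE]
  rcases lt_trichotomy k i with hki | rfl | hki
  · rw [if_pos hki.le, if_pos (by omega), if_pos hki]
    exact hk k hk0 (by omega)
  · rw [if_pos le_rfl, if_pos (by omega), if_neg (lt_irrefl k)]
    refine (hk k hk0 (by omega)).glue (hv ▸ hk (k + m) (by omega) (by omega))
      fun hfwd hbwd => ?_
    obtain ⟨t, hkt, htm, hct, hdesc⟩ := hw.exists_colliderAt_desc (d := m - 1) hfwd
      (by rw [show k + (m - 1) = k + m - 1 by omega, hbwd]; trivial) (by omega)
    obtain ⟨d, hd, hdW⟩ := (hk t (by omega) (by omega)).2 hct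
    exact ⟨d, hdesc.trans hd, hdW⟩
  · rw [if_neg (by omega), if_neg (by omega), if_neg (by omega),
      show k - 1 + m = k + m - 1 by omega]
    exact hk (k + m) (by omega) (by omega)

theorem IsWalk.exists_isPath_isActive (hw : IsWalk G v e n) (ha : IsActive G v e n W) :
    ∃ n' v' e', IsPath G v' e' n' ∧ v' 0 = v 0 ∧ v' (n' - 1) = v (n - 1) ∧
      IsActive G v' e' n' W := by
  induction n using Nat.strong_induction_on generalizing v e with
  | _ n ih =>
  by_cases hinj : ∀ a b, a < n → b < n → v a = v b → a = b
  · exact ⟨n, v, e, ⟨hw, hinj⟩, rfl, rfl, ha⟩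
  push Not at hinj
  obtain ⟨a, b, ha', hb', hab, hne⟩ := hinj
  wlog hlt : a < b generalizing a b
  · exact this b a hb' ha' hab.symm hne.symm (by omega)
  have hv : v a = v (a + (b - a)) := by rwa [Nat.add_sub_cancel' hlt.le]
  obtain ⟨n', v', e', hp, h0, h1, ha''⟩ :=
    ih (n - (b - a)) (by omega) (hw.splice hv (by omega)) (ha.splice hw hv (by omega) (by omega))
  exact ⟨n', v', e', hp, h0.trans spliceV_zero, h1.trans (spliceV_last hv (by omega)), ha''⟩

theorem dSep.blocked_of_isWalk {X Y : Set V} (h : dSep G X Y W) (hw : IsWalk G v e n)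
    (hx : v 0 ∈ X) (hy : v (n - 1) ∈ Y) : Blocked G v e n W := by
  by_contra hb
  obtain ⟨n', v', e', hp, h0, h1, ha⟩ :=
    hw.exists_isPath_isActive (not_blocked_iff_isActive.1 hb)
  exact not_blocked_iff_isActive.2 ha (h n' v' e' hp (h0 ▸ hx) (h1 ▸ hy))

end Shortening

section Quotient

variable {V C : Type} {G : DMG V} (Cl : V → C)

theorem DMG.step.quot {t : EdgeType} {a b : V} (h : G.step t a b) :
    (G.quot Cl).step t (Cl a) (Cl b) := by
  cases t with
  | fwd => exact ⟨a, b, rfl, rfl, h⟩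
  | bwd => exact ⟨b, a, rfl, rfl, h⟩
  | bidir => exact h.imp (fun h => ⟨a, b, rfl, rfl, h⟩) (fun h => ⟨b, a, rfl, rfl, h⟩)

theorem IsWalk.quot {v : ℕ → V} {e : ℕ → EdgeType} {n : ℕ} (hw : IsWalk G v e n) :
    IsWalk (G.quot Cl) (Cl ∘ v) e n :=
  ⟨hw.1, fun k hk => (hw.2 k hk).quot Cl⟩

theorem Desc.quot {a b : V} (h : Desc G a b) : Desc (G.quot Cl) (Cl a) (Cl b) :=
  Relation.ReflTransGen.lift Cl (fun x y hxy => ⟨x, y, rfl, rfl, hxy⟩) _ _ h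

theorem Blocked.of_quot {v : ℕ → V} {e : ℕ → EdgeType} {n : ℕ} {W : Set C}
    (h : Blocked (G.quot Cl) (Cl ∘ v) e n W) : Blocked G v e n (Cl ⁻¹' W) := by
  rcases h with h | h | ⟨k, hk0, hk1, hnc, hk⟩ | ⟨k, hk0, hk1, hc, hk⟩
  · exact Or.inl h
  · exact Or.inr (Or.inl h)
  · exact Or.inr (Or.inr (Or.inl ⟨k, hk0, hk1, hnc, hk⟩))
  · exact Or.inr (Or.inr (Or.inr ⟨k, hk0, hk1, hc, fun d hd => hk (Cl d) (hd.quot Cl)⟩))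

end Quotient

theorem dSep_sound_CDMG_general {V C : Type} (G : DMG V) (Cl : V → C)
    (CX CY CW : Set C)
    (h : dSep (G.quot Cl) CX CY CW) :
    dSep G {x | Cl x ∈ CX} {x | Cl x ∈ CY} {x | Cl x ∈ CW} :=
  fun _ _ _ hp hx hy => (h.blocked_of_isWalk (hp.1.quot Cl) hx hy).of_quot Cl

/-- soundness of d-separation in C-DMGs: if the cluster sets are
d-separated in the C-DMG, then the corresponding unions of clusters are
d-separated in the underlying ADMG. -/
theorem dSep_sound_CDMG {V C : Type} (G : DMG V) (Cl : V → C)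
    (hac : Acyclic G) (hsurj : Function.Surjective Cl)
    (CX CY CW : Set C)
    (hXY : Disjoint CX CY) (hXW : Disjoint CX CW) (hYW : Disjoint CY CW)
    (h : dSep (G.quot Cl) CX CY CW) :
    dSep G {x | Cl x ∈ CX} {x | Cl x ∈ CY} {x | Cl x ∈ CW} :=
  dSep_sound_CDMG_general G Cl CX CY CW h
end

section
/- (Completeness of d-separation in C-DMGs) Let G^c = (C, E^c) be a C-DMG without self-loops restrictions, and C_X, C_Y, C_W disjoint subsets of C. If C_X and C_Y are not d-separated by C_W in G^c, then there exists an ADMG G = (V, E) compatible with G^c (i.e., whose cluster quotient graph is exactly G^c, with each cluster of size at least 2) in which X = ⋃_{C ∈ C_X} C and Y = ⋃_{C ∈ C_Y} C are not d-separated by W = ⋃_{C ∈ C_W} C. -/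
/-!
Blow every cluster up into one copy per integer layer: directed edges go from layer `k` to layer
`k + 1`, bidirected edges join arbitrary layers. This graph is acyclic and its quotient is `Gc`.
A path of `Gc` lifts to it by moving up one layer along forward steps and down one along backward
steps; the lift is again a path with the same colliders, and descendants in `Gc` lift to
descendants, so a blocked lift would make the original path blocked.
-/

namespace DMG

variable {C : Type} (Gc : DMG C)

def layered : DMG (C × ℤ) where
  dir x y := Gc.dir x.1 y.1 ∧ y.2 = x.2 + 1
  bi x y := Gc.bi x.1 y.1

lemma layered_transGen_dir_lt {x y : C × ℤ} (h : Relation.TransGen Gc.layered.dir x y) :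
    x.2 < y.2 := by
  induction h with
  | single hxy => linarith [hxy.2]
  | tail _ hyz ih => linarith [hyz.2]

lemma layered_acyclic : Acyclic Gc.layered :=
  fun _ hx => (layered_transGen_dir_lt Gc hx).false

lemma quot_layered_fst : Gc.layered.quot Prod.fst = Gc := by
  obtain ⟨dir, bi⟩ := Gc
  simp only [quot, layered, DMG.mk.injEq]
  constructor <;> funext a b
  · exact propext ⟨fun ⟨_, _, ha, hb, hxy⟩ => ha ▸ hb ▸ hxy.1,
      fun hab => ⟨(a, 0), (b, 1), rfl, rfl, hab, rfl⟩⟩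
  · exact propext ⟨fun ⟨_, _, ha, hb, hxy⟩ => ha ▸ hb ▸ hxy,
      fun hab => ⟨(a, 0), (b, 0), rfl, rfl, hab⟩⟩

variable {Gc}

lemma exists_desc_layered {a d : C} (h : Desc Gc a d) (k : ℤ) :
    ∃ m, Desc Gc.layered (a, k) (d, m) := by
  induction h with
  | refl => exact ⟨k, .refl⟩
  | tail _ hcd ih =>
    obtain ⟨m, hm⟩ := ih
    exact ⟨m + 1, hm.tail ⟨hcd, rfl⟩⟩

end DMG

def EdgeType.rise : EdgeType → ℤ
  | .fwd => 1
  | .bwd => -1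
  | .bidir => 0

def liftHeight (e : ℕ → EdgeType) (i : ℕ) : ℤ :=
  ∑ j ∈ Finset.range i, (e j).rise

lemma liftHeight_succ (e : ℕ → EdgeType) (i : ℕ) :
    liftHeight e (i + 1) = liftHeight e i + (e i).rise :=
  Finset.sum_range_succ _ _

section Lift

variable {C : Type} {Gc : DMG C}

lemma DMG.step_layered {t : EdgeType} {a b : C} (h : Gc.step t a b) (k : ℤ) :
    Gc.layered.step t (a, k) (b, k + t.rise) := by
  cases t
  · exact ⟨h, rfl⟩
  · exact ⟨h, by simp [EdgeType.rise]⟩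
  · exact h

lemma IsPath.layered_lift {v : ℕ → C} {e : ℕ → EdgeType} {n : ℕ} (hp : IsPath Gc v e n) :
    IsPath Gc.layered (fun i => (v i, liftHeight e i)) e n := by
  obtain ⟨⟨hn, hstep⟩, hinj⟩ := hp
  refine ⟨⟨hn, fun i hi => ?_⟩, fun i j hi hj hij => hinj i j hi hj (congrArg Prod.fst hij)⟩
  simp only [liftHeight_succ]
  exact DMG.step_layered (hstep i hi) _

lemma Blocked.of_layered_lift {v : ℕ → C} {e : ℕ → EdgeType} {n : ℕ} {W : Set C}
    (hb : Blocked Gc.layered (fun i => (v i, liftHeight e i)) e n (Prod.fst ⁻¹' W)) :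
    Blocked Gc v e n W := by
  rcases hb with h0 | hlast | hnc | ⟨i, hi0, hin, hcol, hdesc⟩
  · exact .inl h0
  · exact .inr (.inl hlast)
  · exact .inr (.inr (.inl hnc))
  · refine .inr (.inr (.inr ⟨i, hi0, hin, hcol, fun d hd hdW => ?_⟩))
    obtain ⟨m, hm⟩ := DMG.exists_desc_layered hd (liftHeight e i)
    exact hdesc (d, m) hm hdW

lemma DMG.not_dSep_layered {X Y W : Set C} (h : ¬ dSep Gc X Y W) :
    ¬ dSep Gc.layered (Prod.fst ⁻¹' X) (Prod.fst ⁻¹' Y) (Prod.fst ⁻¹' W) := by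
  simp only [dSep, not_forall] at h
  obtain ⟨n, v, e, hp, hX, hY, hnb⟩ := h
  exact fun hsep => hnb (hsep n _ e hp.layered_lift hX hY).of_layered_lift

end Lift

theorem dSep_complete_CDMG_general {C : Type} (Gc : DMG C)
    (CX CY CW : Set C)
    (h : ¬ dSep Gc CX CY CW) :
    ∃ (V : Type) (G : DMG V) (Cl : V → C),
      Acyclic G ∧ G.quot Cl = Gc ∧
      (∀ c : C, ∃ x y : V, x ≠ y ∧ Cl x = c ∧ Cl y = c) ∧
      ¬ dSep G {x | Cl x ∈ CX} {x | Cl x ∈ CY} {x | Cl x ∈ CW} :=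
  ⟨C × ℤ, Gc.layered, Prod.fst, Gc.layered_acyclic, Gc.quot_layered_fst,
    fun c => ⟨(c, 0), (c, 1), by simp, rfl, rfl⟩, DMG.not_dSep_layered h⟩

/-- completeness of d-separation in C-DMGs: if the cluster sets are
not d-separated in the C-DMG, then there is a compatible ADMG, with every
cluster of size at least 2, in which the unions of clusters are not d-separated. -/
theorem dSep_complete_CDMG {C : Type} (Gc : DMG C)
    (CX CY CW : Set C)
    (hXY : Disjoint CX CY) (hXW : Disjoint CX CW) (hYW : Disjoint CY CW)
    (h : ¬ dSep Gc CX CY CW) :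
    ∃ (V : Type) (G : DMG V) (Cl : V → C),
      Acyclic G ∧ G.quot Cl = Gc ∧
      (∀ c : C, ∃ x y : V, x ≠ y ∧ Cl x = c ∧ Cl y = c) ∧
      ¬ dSep G {x | Cl x ∈ CX} {x | Cl x ∈ CY} {x | Cl x ∈ CW} :=
  dSep_complete_CDMG_general Gc CX CY CW h
end

section
/- (Compatibility of mutilated graphs) Let G = (V, E) be an ADMG with compatible C-DMG G^c = (C, E^c), and let C_A, C_B ⊆ C, with A = ⋃_{C ∈ C_A} C and B = ⋃_{C ∈ C_B} C. Then the mutilated graph (G^c)_{\overline{C_A}\underline{C_B}} (obtained from G^c by removing all edges into clusters in C_A and all directed edges out of clusters in C_B) is exactly the C-DMG compatible with the mutilated ADMG G_{\overline{A}\underline{B}} (obtained from G by removing all edges into A and all directed edges out of B). -/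
/-! The sets `Cl ⁻¹' CA` and `Cl ⁻¹' CB` are unions of clusters, so whether an edge of `G`
survives the mutilation depends only on the clusters of its endpoints, which is exactly the
condition for the corresponding edge of the quotient to survive. -/

attribute [ext] DMG

section QuotMutilate

variable {V C : Type} (G : DMG V) (Cl : V → C) (CA CB : Set C)

theorem quot_mutilate_preimage_dir (a b : C) :
    ((mutilate G (Cl ⁻¹' CA) (Cl ⁻¹' CB)).quot Cl).dir a b ↔
      (mutilate (G.quot Cl) CA CB).dir a b := by
  constructor
  · rintro ⟨x, y, rfl, rfl, hxy, hyA, hxB⟩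
    exact ⟨⟨x, y, rfl, rfl, hxy⟩, hyA, hxB⟩
  · rintro ⟨⟨x, y, rfl, rfl, hxy⟩, hyA, hxB⟩
    exact ⟨x, y, rfl, rfl, hxy, hyA, hxB⟩

theorem quot_mutilate_preimage_bi (a b : C) :
    ((mutilate G (Cl ⁻¹' CA) (Cl ⁻¹' CB)).quot Cl).bi a b ↔
      (mutilate (G.quot Cl) CA CB).bi a b := by
  constructor
  · rintro ⟨x, y, rfl, rfl, hxy, hxA, hyA⟩
    exact ⟨⟨x, y, rfl, rfl, hxy⟩, hxA, hyA⟩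
  · rintro ⟨⟨x, y, rfl, rfl, hxy⟩, hxA, hyA⟩
    exact ⟨x, y, rfl, rfl, hxy, hxA, hyA⟩

theorem quot_mutilate_preimage :
    (mutilate G (Cl ⁻¹' CA) (Cl ⁻¹' CB)).quot Cl = mutilate (G.quot Cl) CA CB := by
  ext a b
  · exact quot_mutilate_preimage_dir G Cl CA CB a b
  · exact quot_mutilate_preimage_bi G Cl CA CB a b

end QuotMutilate

theorem quot_mutilate_comm_general {V C : Type} (G : DMG V) (Cl : V → C)
    (CA CB : Set C) :
    (mutilate G {x | Cl x ∈ CA} {x | Cl x ∈ CB}).quot Cl =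
      mutilate (G.quot Cl) CA CB :=
  quot_mutilate_preimage G Cl CA CB

/-- compatibility of mutilated graphs: the cluster quotient of the
mutilated ADMG is exactly the mutilated C-DMG, i.e. quotient and mutilation
commute. -/
theorem quot_mutilate_comm {V C : Type} (G : DMG V) (Cl : V → C)
    (hac : Acyclic G) (hsurj : Function.Surjective Cl)
    (CA CB : Set C) :
    (mutilate G {x | Cl x ∈ CA} {x | Cl x ∈ CB}).quot Cl =
      mutilate (G.quot Cl) CA CB :=
  quot_mutilate_comm_general G Cl CA CB
end

section
/- (Rule 3 ancestor transfer) Let G = (V, E) be an ADMG with compatible C-DMG G^c = (C, E^c), and C_Z, C_W ⊆ C with Z, W the unions of the respective clusters. For any X ∈ V: if X is an ancestor of some vertex of W in the mutilated graph G_{\overline{Z}}, then Cl(X) is an ancestor of some cluster of C_W in (G^c)_{\overline{C_Z}}. Contrapositively, if no cluster in C_X is an ancestor of C_W in (G^c)_{\overline{C_Z}}, then no vertex of X = ⋃ C_X is an ancestor of W in G_{\overline{Z}}; hence the sets X(W) (non-ancestors of W among X) satisfy: C_X(C_W) = C_X implies X(W) = X. -/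
theorem DMG.mutilate_quot_dir {V C : Type} (G : DMG V) (Cl : V → C) (A B : Set C) {a b : V}
    (h : (mutilate G (Cl ⁻¹' A) (Cl ⁻¹' B)).dir a b) :
    (mutilate (G.quot Cl) A B).dir (Cl a) (Cl b) :=
  ⟨⟨a, b, rfl, rfl, h.1⟩, h.2.1, h.2.2⟩

theorem DMG.mutilate_quot_reflTransGen {V C : Type} (G : DMG V) (Cl : V → C) (A B : Set C)
    {a b : V} (h : Relation.ReflTransGen (mutilate G (Cl ⁻¹' A) (Cl ⁻¹' B)).dir a b) :
    Relation.ReflTransGen (mutilate (G.quot Cl) A B).dir (Cl a) (Cl b) :=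
  h.lift Cl fun _ _ => G.mutilate_quot_dir Cl A B

theorem rule3_ancestor_transfer_general {V C : Type} (G : DMG V) (Cl : V → C)
    (CZ CW : Set C) :
    (∀ x : V,
      (∃ w, Cl w ∈ CW ∧
        Relation.ReflTransGen (mutilate G {a | Cl a ∈ CZ} ∅).dir x w) →
      ∃ c ∈ CW, Relation.ReflTransGen (mutilate (G.quot Cl) CZ ∅).dir (Cl x) c) ∧
    (∀ CX : Set C,
      (∀ cx ∈ CX, ¬ ∃ c ∈ CW,
        Relation.ReflTransGen (mutilate (G.quot Cl) CZ ∅).dir cx c) →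
      ∀ x : V, Cl x ∈ CX →
        ¬ ∃ w, Cl w ∈ CW ∧
          Relation.ReflTransGen (mutilate G {a | Cl a ∈ CZ} ∅).dir x w) := by
  have lift : ∀ {x w : V}, Relation.ReflTransGen (mutilate G {a | Cl a ∈ CZ} ∅).dir x w →
      Relation.ReflTransGen (mutilate (G.quot Cl) CZ ∅).dir (Cl x) (Cl w) :=
    G.mutilate_quot_reflTransGen Cl CZ ∅
  exact ⟨fun x ⟨w, hw, h⟩ => ⟨Cl w, hw, lift h⟩,
    fun CX hCX x hx ⟨w, hw, h⟩ => hCX (Cl x) hx ⟨Cl w, hw, lift h⟩⟩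

/-- Rule 3 ancestor transfer: ancestorship of the conditioning
clusters transfers from the mutilated ADMG to the mutilated C-DMG; hence if no
cluster in a set is an ancestor of the conditioning clusters in the mutilated
C-DMG, then no vertex of the corresponding union is an ancestor of the union of
the conditioning clusters in the mutilated ADMG. -/
theorem rule3_ancestor_transfer {V C : Type} (G : DMG V) (Cl : V → C)
    (hac : Acyclic G) (hsurj : Function.Surjective Cl)
    (CZ CW : Set C) :
    (∀ x : V,
      (∃ w, Cl w ∈ CW ∧
        Relation.ReflTransGen (mutilate G {a | Cl a ∈ CZ} ∅).dir x w) →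
      ∃ c ∈ CW, Relation.ReflTransGen (mutilate (G.quot Cl) CZ ∅).dir (Cl x) c) ∧
    (∀ CX : Set C,
      (∀ cx ∈ CX, ¬ ∃ c ∈ CW,
        Relation.ReflTransGen (mutilate (G.quot Cl) CZ ∅).dir cx c) →
      ∀ x : V, Cl x ∈ CX →
        ¬ ∃ w, Cl w ∈ CW ∧
          Relation.ReflTransGen (mutilate G {a | Cl a ∈ CZ} ∅).dir x w) :=
  rule3_ancestor_transfer_general G Cl CZ CW
end

section
/- (Completeness of Rule 1 in C-DMGs) Let G^c be a C-DMG and C_X, C_Y, C_Z, C_W disjoint subsets of clusters. If C_Y and C_X are NOT d-separated by C_Z ∪ C_W in (G^c)_{\overline{C_Z}}, then there exists an ADMG G compatible with G^c (with all clusters of size ≥ 2) such that Y and X are not d-separated by Z ∪ W in G_{\overline{Z}}. -/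
def walkLevel (e : ℕ → EdgeType) (i : ℕ) : ℤ :=
  ∑ j ∈ Finset.range i, (e j).rise

lemma walkLevel_succ (e : ℕ → EdgeType) (i : ℕ) :
    walkLevel e (i + 1) = walkLevel e i + (e i).rise :=
  Finset.sum_range_succ _ i

namespace DMG

variable {C : Type}

def levelLift (G : DMG C) : DMG (C × ℤ) where
  dir a b := G.dir a.1 b.1 ∧ b.2 = a.2 + 1
  bi a b := G.bi a.1 b.1

lemma levelLift_lt_of_transGen {G : DMG C} {a b : C × ℤ}
    (h : Relation.TransGen G.levelLift.dir a b) : a.2 < b.2 := by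
  induction h with
  | single hab => exact hab.2 ▸ lt_add_one _
  | tail _ hbc ih => exact hbc.2 ▸ ih.trans (lt_add_one _)

lemma acyclic_levelLift (G : DMG C) : Acyclic G.levelLift :=
  fun _ h => (levelLift_lt_of_transGen h).false

lemma quot_levelLift (G : DMG C) : G.levelLift.quot Prod.fst = G := by
  cases G with
  | mk dir bi =>
    simp only [quot, levelLift, mk.injEq]
    constructor
    · funext a b
      exact propext ⟨fun ⟨_, _, ha, hb, hab, _⟩ => ha ▸ hb ▸ hab,
        fun hab => ⟨(a, 0), (b, 1), rfl, rfl, hab, rfl⟩⟩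
    · funext a b
      exact propext ⟨fun ⟨_, _, ha, hb, hab⟩ => ha ▸ hb ▸ hab,
        fun hab => ⟨(a, 0), (b, 0), rfl, rfl, hab⟩⟩

lemma mutilate_levelLift (G : DMG C) (A B : Set C) :
    mutilate G.levelLift (Prod.fst ⁻¹' A) (Prod.fst ⁻¹' B) = (mutilate G A B).levelLift := by
  simp only [mutilate, levelLift, mk.injEq]
  constructor
  · funext a b
    exact propext ⟨fun ⟨⟨hab, hk⟩, hA, hB⟩ => ⟨⟨hab, hA, hB⟩, hk⟩,
      fun ⟨⟨hab, hA, hB⟩, hk⟩ => ⟨⟨hab, hk⟩, hA, hB⟩⟩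
  · rfl

lemma step_levelLift {G : DMG C} {t : EdgeType} {a b : C} (h : G.step t a b) (k : ℤ) :
    G.levelLift.step t (a, k) (b, k + t.rise) := by
  cases t with
  | fwd => exact ⟨h, rfl⟩
  | bwd => exact ⟨h, by simp [EdgeType.rise]⟩
  | bidir => exact h

lemma isPath_levelLift {G : DMG C} {v : ℕ → C} {e : ℕ → EdgeType} {n : ℕ}
    (h : IsPath G v e n) : IsPath G.levelLift (fun i => (v i, walkLevel e i)) e n := by
  refine ⟨⟨h.1.1, fun i hi => ?_⟩, fun i j hi hj hij => h.2 i j hi hj (congrArg Prod.fst hij)⟩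
  simpa only [walkLevel_succ] using step_levelLift (h.1.2 i hi) (walkLevel e i)

lemma exists_desc_levelLift {G : DMG C} {a b : C} (h : Desc G a b) (k : ℤ) :
    ∃ l, Desc G.levelLift (a, k) (b, l) := by
  induction h with
  | refl => exact ⟨k, .refl⟩
  | tail _ hbc ih =>
    obtain ⟨l, hl⟩ := ih
    exact ⟨l + 1, hl.tail ⟨hbc, rfl⟩⟩

lemma blocked_of_blocked_levelLift {G : DMG C} {v : ℕ → C} {e : ℕ → EdgeType} {n : ℕ}
    {W : Set C} (h : Blocked G.levelLift (fun i => (v i, walkLevel e i)) e n (Prod.fst ⁻¹' W)) :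
    Blocked G v e n W := by
  refine h.imp id (Or.imp id (Or.imp id ?_))
  rintro ⟨i, hi0, hin, hcol, hnoDesc⟩
  refine ⟨i, hi0, hin, hcol, fun d hd hdW => ?_⟩
  obtain ⟨l, hl⟩ := exists_desc_levelLift hd (walkLevel e i)
  exact hnoDesc (d, l) hl hdW

lemma dSep_of_dSep_levelLift {G : DMG C} {X Y W : Set C}
    (h : dSep G.levelLift (Prod.fst ⁻¹' X) (Prod.fst ⁻¹' Y) (Prod.fst ⁻¹' W)) :
    dSep G X Y W :=
  fun _ _ _ hpath hX hY => blocked_of_blocked_levelLift (h _ _ _ (isPath_levelLift hpath) hX hY)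

end DMG

theorem rule1_complete_CDMG_general {C : Type} (Gc : DMG C)
    (CX CY CZ CW : Set C)
    (h : ¬ dSep (mutilate Gc CZ ∅) CY CX (CZ ∪ CW)) :
    ∃ (V : Type) (G : DMG V) (Cl : V → C),
      Acyclic G ∧ G.quot Cl = Gc ∧
      (∀ c : C, ∃ x y : V, x ≠ y ∧ Cl x = c ∧ Cl y = c) ∧
      ¬ dSep (mutilate G {x | Cl x ∈ CZ} ∅)
          {x | Cl x ∈ CY} {x | Cl x ∈ CX} {x | Cl x ∈ CZ ∪ CW} := by
  refine ⟨C × ℤ, Gc.levelLift, Prod.fst, Gc.acyclic_levelLift, Gc.quot_levelLift,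
    fun c => ⟨(c, 0), (c, 1), by simp, rfl, rfl⟩, fun hsep => h (DMG.dSep_of_dSep_levelLift ?_)⟩
  rw [← DMG.mutilate_levelLift, Set.preimage_empty]
  exact hsep

/-- completeness of Rule 1 in C-DMGs: if the cluster sets are not
d-separated in the mutilated C-DMG, then some compatible ADMG with all clusters
of size at least 2 exhibits the corresponding failure of d-separation in its
mutilated graph. -/
theorem rule1_complete_CDMG {C : Type} (Gc : DMG C)
    (CX CY CZ CW : Set C)
    (hXY : Disjoint CX CY) (hXZ : Disjoint CX CZ) (hXW : Disjoint CX CW)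
    (hYZ : Disjoint CY CZ) (hYW : Disjoint CY CW) (hZW : Disjoint CZ CW)
    (h : ¬ dSep (mutilate Gc CZ ∅) CY CX (CZ ∪ CW)) :
    ∃ (V : Type) (G : DMG V) (Cl : V → C),
      Acyclic G ∧ G.quot Cl = Gc ∧
      (∀ c : C, ∃ x y : V, x ≠ y ∧ Cl x = c ∧ Cl y = c) ∧
      ¬ dSep (mutilate G {x | Cl x ∈ CZ} ∅)
          {x | Cl x ∈ CY} {x | Cl x ∈ CX} {x | Cl x ∈ CZ ∪ CW} :=
  rule1_complete_CDMG_general Gc CX CY CZ CW h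
end

section
/- Consider the C-DMG G^c with clusters C_X, C_W, C_Y, edges C_X → C_Y, C_X → C_W, C_W → C_X (a 2-cycle between C_X and C_W), where |C_X| = |C_Y| = 1 and |C_W| = 2, and no bidirected edges. Then every ADMG compatible with G^c (respecting these cluster sizes) has vertex set {X₁, Y₁, W₁, W₂} with X₁ → Y₁, and the edges between {X₁} and {W₁, W₂} consist of exactly one edge Wᵢ → X₁ and one edge X₁ → Wⱼ with i ≠ j; in particular, in every such ADMG there is no directed path from Y₁ to X₁, and X₁ and Y₁ have no common cause, so Y₁ is d-separated from X₁ in G_{\underline{X₁}}. -/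
/-- Cluster map: vertex 0 is X1 (cluster 0), vertex 1 is Y1 (cluster 1),
vertices 2 and 3 are W1, W2 (cluster 2). -/
def clMap : Fin 4 → Fin 3 := ![0, 1, 2, 2]

/-- The C-DMG with edges C_X → C_Y, C_X → C_W, C_W → C_X and no bidirected
edges, where C_X is cluster 0, C_Y is cluster 1, C_W is cluster 2. -/
def exampleCDMG : DMG (Fin 3) where
  dir a b := (a = 0 ∧ b = 1) ∨ (a = 0 ∧ b = 2) ∨ (a = 2 ∧ b = 0)
  bi _ _ := False


/-!
Because `C_X` and `C_Y` are singletons, the cluster edge `C_X → C_Y` can only be realised by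
`X₁ → Y₁`, and no other cluster edge touches `C_Y`. The 2-cycle `C_X ⇄ C_W` needs an edge
`Wᵢ → X₁` and an edge `X₁ → Wⱼ`; acyclicity forbids `i = j`. Once the edges out of `X₁` are
removed, `Y₁` has no incident edge at all, so every path starting at `Y₁` is trivial and `Y₁` is
d-separated from `X₁`.
-/

namespace Relation

variable {α : Type*} {r : α → α → Prop} {a b : α}

theorem not_transGen_of_forall_not_left (h : ∀ c, ¬ r a c) : ¬ TransGen r a b := fun hab =>
  let ⟨_, hac, _⟩ := TransGen.head'_iff.mp hab
  h _ hac

theorem not_transGen_of_forall_not_right (h : ∀ c, ¬ r c b) : ¬ TransGen r a b := fun hab =>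
  let ⟨_, _, hcb⟩ := TransGen.tail'_iff.mp hab
  h _ hcb

end Relation

section General

variable {V C : Type} {G : DMG V} {Cl : V → C} {H : DMG C}

theorem Acyclic.not_dir_of_dir (hG : Acyclic G) {a b : V} (hab : G.dir a b) : ¬ G.dir b a :=
  fun hba => hG a (.head hab (.single hba))

theorem DMG.dir_of_quot_eq (hq : G.quot Cl = H) {x y : V} (h : G.dir x y) :
    H.dir (Cl x) (Cl y) :=
  hq ▸ ⟨x, y, rfl, rfl, h⟩

theorem DMG.bi_of_quot_eq (hq : G.quot Cl = H) {x y : V} (h : G.bi x y) :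
    H.bi (Cl x) (Cl y) :=
  hq ▸ ⟨x, y, rfl, rfl, h⟩

theorem DMG.exists_dir_of_quot_eq (hq : G.quot Cl = H) {a b : C} (h : H.dir a b) :
    ∃ x y, Cl x = a ∧ Cl y = b ∧ G.dir x y := by
  subst hq
  exact h

theorem dSep_of_isolated {X Y : Set V} (W : Set V) (hX : ∀ x ∈ X, ∀ t c, ¬ G.step t x c)
    (hXY : Disjoint X Y) : dSep G X Y W := by
  intro n v e hp h0 hn
  obtain ⟨⟨hpos, hstep⟩, -⟩ := hp
  obtain rfl | hn2 : n = 1 ∨ 1 < n := by omega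
  · exact absurd hn (hXY.notMem_of_mem_left h0)
  · exact absurd (hstep 0 hn2) (hX _ h0 _ _)

end General

section Example

variable {G : DMG (Fin 4)} (hquot : G.quot clMap = exampleCDMG)
include hquot

theorem not_dir_one (c : Fin 4) : ¬ G.dir 1 c := fun h => by
  have := DMG.dir_of_quot_eq hquot h
  fin_cases c <;> simp_all [exampleCDMG, clMap]

theorem not_dir_to_one {c : Fin 4} (hc : c ≠ 0) : ¬ G.dir c 1 := fun h => by
  have := DMG.dir_of_quot_eq hquot h
  fin_cases c <;> simp_all [exampleCDMG, clMap]

theorem not_bi (x y : Fin 4) : ¬ G.bi x y := DMG.bi_of_quot_eq hquot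

theorem dir_zero_one : G.dir 0 1 := by
  obtain ⟨x, y, hx, hy, h⟩ :=
    DMG.exists_dir_of_quot_eq hquot (show exampleCDMG.dir 0 1 by simp [exampleCDMG])
  fin_cases x <;> fin_cases y <;> simp_all [clMap]

theorem dir_zero_two_or_three : G.dir 0 2 ∨ G.dir 0 3 := by
  obtain ⟨x, y, hx, hy, h⟩ :=
    DMG.exists_dir_of_quot_eq hquot (show exampleCDMG.dir 0 2 by simp [exampleCDMG])
  fin_cases x <;> fin_cases y <;> simp_all [clMap]

theorem dir_two_or_three_zero : G.dir 2 0 ∨ G.dir 3 0 := by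
  obtain ⟨x, y, hx, hy, h⟩ :=
    DMG.exists_dir_of_quot_eq hquot (show exampleCDMG.dir 2 0 by simp [exampleCDMG])
  fin_cases x <;> fin_cases y <;> simp_all [clMap]

theorem dir_zero_w_cases (hac : Acyclic G) :
    (G.dir 2 0 ∧ G.dir 0 3 ∧ ¬ G.dir 3 0 ∧ ¬ G.dir 0 2) ∨
    (G.dir 3 0 ∧ G.dir 0 2 ∧ ¬ G.dir 2 0 ∧ ¬ G.dir 0 3) := by
  rcases dir_two_or_three_zero hquot with h20 | h30
  · have h03 := (dir_zero_two_or_three hquot).resolve_left (hac.not_dir_of_dir h20)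
    exact .inl ⟨h20, h03, hac.not_dir_of_dir h03, hac.not_dir_of_dir h20⟩
  · have h02 := (dir_zero_two_or_three hquot).resolve_right (hac.not_dir_of_dir h30)
    exact .inr ⟨h30, h02, hac.not_dir_of_dir h02, hac.not_dir_of_dir h30⟩

theorem not_mutilate_dir_to_one (c : Fin 4) : ¬ (mutilate G ∅ {0}).dir c 1 :=
  fun ⟨h, _, hc⟩ => not_dir_to_one hquot hc h

theorem mutilate_isolated_one (t : EdgeType) (c : Fin 4) : ¬ (mutilate G ∅ {0}).step t 1 c := by
  cases t
  · exact fun h => not_dir_one hquot c h.1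
  · exact not_mutilate_dir_to_one hquot c
  · rintro (h | h)
    exacts [not_bi hquot _ _ h.1, not_bi hquot _ _ h.1]

end Example

/-- every ADMG compatible with the example C-DMG (with the fixed
cluster sizes 1, 1, 2) has the edge X1 → Y1, exactly one edge from a W vertex
into X1 and one edge from X1 into the other W vertex, no directed path from Y1
to X1, no common cause of X1 and Y1, and Y1 is d-separated from X1 once the
edges out of X1 are removed. -/
theorem singleton_cluster_example (G : DMG (Fin 4))
    (hac : Acyclic G) (hquot : G.quot clMap = exampleCDMG) :
    G.dir 0 1 ∧
    ((G.dir 2 0 ∧ G.dir 0 3 ∧ ¬ G.dir 3 0 ∧ ¬ G.dir 0 2) ∨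
     (G.dir 3 0 ∧ G.dir 0 2 ∧ ¬ G.dir 2 0 ∧ ¬ G.dir 0 3)) ∧
    ¬ Relation.TransGen G.dir 1 0 ∧
    ¬ (∃ z : Fin 4, Relation.TransGen G.dir z 0 ∧
        Relation.TransGen (mutilate G ∅ {0}).dir z 1) ∧
    dSep (mutilate G ∅ {0}) {1} {0} ∅ :=
  ⟨dir_zero_one hquot, dir_zero_w_cases hquot hac,
    Relation.not_transGen_of_forall_not_left (not_dir_one hquot),
    fun ⟨_, _, h⟩ => Relation.not_transGen_of_forall_not_right (not_mutilate_dir_to_one hquot) h,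
    dSep_of_isolated ∅ (fun _ hx => hx ▸ mutilate_isolated_one hquot)
      (Set.disjoint_singleton.mpr (by decide))⟩
end

section
/- (Descendant containment under quotient) Let G = (V, E) be an ADMG with C-DMG G^c over partition C. For every V ∈ V, Desc(V, G) ⊆ ⋃_{C ∈ Desc(Cl(V), G^c)} C. Consequently, for W = ⋃_{C ∈ C_W} C with C_W ⊆ C: Desc(Cl(V), G^c) ∩ C_W = ∅ implies Desc(V, G) ∩ W = ∅. -/
theorem DMG.quot_dir_map {V C : Type} (G : DMG V) (Cl : V → C) {x y : V}
    (h : G.dir x y) : (G.quot Cl).dir (Cl x) (Cl y) :=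
  ⟨x, y, rfl, rfl, h⟩

theorem Desc.quot_map {V C : Type} {G : DMG V} (Cl : V → C) {x d : V}
    (h : Desc G x d) : Desc (G.quot Cl) (Cl x) (Cl d) :=
  h.lift Cl fun _ _ => G.quot_dir_map Cl

theorem desc_containment_quotient_general {V C : Type} (G : DMG V) (Cl : V → C) :
    (∀ x d : V, Desc G x d → Desc (G.quot Cl) (Cl x) (Cl d)) ∧
    (∀ (CW : Set C) (x : V),
      (∀ c : C, Desc (G.quot Cl) (Cl x) c → c ∉ CW) →
      ∀ d : V, Desc G x d → Cl d ∉ CW) :=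
  ⟨fun _ _ => Desc.quot_map Cl, fun _ _ hCW _ hd => hCW _ (hd.quot_map Cl)⟩

/-- descendant containment under quotient: descendants at the
micro level map into descendants of the cluster at the macro level; hence a
cluster-level collider with no cluster-descendant among the conditioning
clusters has no micro-descendant in the union of those clusters. -/
theorem desc_containment_quotient {V C : Type} (G : DMG V) (Cl : V → C)
    (hac : Acyclic G) (hsurj : Function.Surjective Cl) :
    (∀ x d : V, Desc G x d → Desc (G.quot Cl) (Cl x) (Cl d)) ∧
    (∀ (CW : Set C) (x : V),
      (∀ c : C, Desc (G.quot Cl) (Cl x) c → c ∉ CW) →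
      ∀ d : V, Desc G x d → Cl d ∉ CW) :=
  desc_containment_quotient_general G Cl
end
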